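/- arXiv:2007.06007 — 4 statements merged into one kernel-verified Lean document; each statement's English description precedes it below -/
import Mathlib

section
/- If ξ : ℝ → ℝ satisfies ξ' = a₀ + a₁ξ + a₂ξ² with a₂ ≠ 0 and is injective, and x₁, …, x_ℓ are pairwise distinct real numbers, then the matrix whose columns are (1, ξ(x_j), ξ'(x_j), …, D^{ℓ-2}ξ(x_j)) for j = 1,…,ℓ is invertible. -/
open Polynomial Matrix

/-- The sequence of polynomials such that the n-th iterated derivative of ξ is `q n` eval ξ. -/
noncomputable def qpoly (a₀ a₁ a₂ : ℝ) : ℕ → ℝ[X]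
  | 0 => X
  | n + 1 => derivative (qpoly a₀ a₁ a₂ n) * (C a₂ * X ^ 2 + C a₁ * X + C a₀)

lemma qpoly_deg (a₀ a₁ a₂ : ℝ) (ha₂ : a₂ ≠ 0) :
    ∀ n, qpoly a₀ a₁ a₂ n ≠ 0 ∧ (qpoly a₀ a₁ a₂ n).natDegree = n + 1 := by
  have hquad0 : (C a₂ * X ^ 2 + C a₁ * X + C a₀ : ℝ[X]) ≠ 0 := by
    intro h
    have := natDegree_quadratic ha₂ (b := a₁) (c := a₀)
    rw [h] at this
    simp at this
  have hquaddeg : (C a₂ * X ^ 2 + C a₁ * X + C a₀ : ℝ[X]).natDegree = 2 :=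
    natDegree_quadratic ha₂
  intro n
  induction n with
  | zero => exact ⟨X_ne_zero, natDegree_X⟩
  | succ n ih =>
    obtain ⟨hne, hdeg⟩ := ih
    -- derivative of q n has nonzero coeff at n
    have hc : (derivative (qpoly a₀ a₁ a₂ n)).coeff n ≠ 0 := by
      rw [coeff_derivative]
      have : (qpoly a₀ a₁ a₂ n).coeff (n + 1) ≠ 0 := by
        rw [← hdeg]
        exact mt leadingCoeff_eq_zero.mp hne
      positivity
    have hd0 : derivative (qpoly a₀ a₁ a₂ n) ≠ 0 := fun h => hc (by simp [h])
    have hdle : (derivative (qpoly a₀ a₁ a₂ n)).natDegree ≤ n := by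
      have := natDegree_derivative_le (qpoly a₀ a₁ a₂ n)
      omega
    have hdge : n ≤ (derivative (qpoly a₀ a₁ a₂ n)).natDegree :=
      le_natDegree_of_ne_zero hc
    have hddeg : (derivative (qpoly a₀ a₁ a₂ n)).natDegree = n := le_antisymm hdle hdge
    refine ⟨mul_ne_zero hd0 hquad0, ?_⟩
    rw [qpoly, natDegree_mul hd0 hquad0, hddeg, hquaddeg]

lemma qpoly_iteratedDeriv (a₀ a₁ a₂ : ℝ) (ξ : ℝ → ℝ) (hsmooth : ContDiff ℝ (⊤ : ℕ∞) ξ)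
    (hode : ∀ x, deriv ξ x = a₀ + a₁ * ξ x + a₂ * (ξ x) ^ 2) :
    ∀ n x, iteratedDeriv n ξ x = (qpoly a₀ a₁ a₂ n).eval (ξ x) := by
  intro n
  induction n with
  | zero => intro x; simp [qpoly]
  | succ n ih =>
    intro x
    rw [iteratedDeriv_succ]
    have hfn : iteratedDeriv n ξ = fun y => (qpoly a₀ a₁ a₂ n).eval (ξ y) := funext ih
    rw [hfn]
    have hξ : HasDerivAt ξ (deriv ξ x) x :=
      ((hsmooth.differentiable (by simp)) x).hasDerivAt
    have h : HasDerivAt (fun y => (qpoly a₀ a₁ a₂ n).eval (ξ y))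
        ((derivative (qpoly a₀ a₁ a₂ n)).eval (ξ x) * deriv ξ x) x :=
      ((qpoly a₀ a₁ a₂ n).hasDerivAt (ξ x)).comp x hξ
    rw [h.deriv, hode x, qpoly]
    simp only [eval_mul, eval_add, eval_C, eval_X, eval_pow]
    ring

theorem vandermonde_like_invertible (ℓ : ℕ) (hℓ : 2 ≤ ℓ) (a₀ a₁ a₂ : ℝ)
    (ha₂ : a₂ ≠ 0) (ξ : ℝ → ℝ) (hsmooth : ContDiff ℝ (⊤ : ℕ∞) ξ)
    (hode : ∀ x, deriv ξ x = a₀ + a₁ * ξ x + a₂ * (ξ x) ^ 2)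
    (hinj : Function.Injective ξ)
    (x : Fin ℓ → ℝ) (hx : Function.Injective x) :
    IsUnit (Matrix.of fun i j : Fin ℓ =>
        if i.val = 0 then (1 : ℝ) else iteratedDeriv (i.val - 1) ξ (x j)) := by
  classical
  set p : Fin ℓ → ℝ[X] := fun i => if i.val = 0 then 1 else qpoly a₀ a₁ a₂ (i.val - 1) with hp
  have hpdeg : ∀ i : Fin ℓ, (p i).natDegree = i.val := by
    intro i
    by_cases h : i.val = 0
    · simp [hp, h]
    · have := (qpoly_deg a₀ a₁ a₂ ha₂ (i.val - 1)).2
      simp only [hp, h, if_false]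
      omega
  have hpne : ∀ i : Fin ℓ, p i ≠ 0 := by
    intro i
    by_cases h : i.val = 0
    · simp [hp, h]
    · simpa [hp, h] using (qpoly_deg a₀ a₁ a₂ ha₂ (i.val - 1)).1
  set y : Fin ℓ → ℝ := fun j => ξ (x j) with hy
  set A : Matrix (Fin ℓ) (Fin ℓ) ℝ := Matrix.of fun i k => (p i).coeff k with hA
  -- the matrix factors as A * (vandermonde y)ᵀ
  have hfact : (Matrix.of fun i j : Fin ℓ =>
      if i.val = 0 then (1 : ℝ) else iteratedDeriv (i.val - 1) ξ (x j))
      = A * (Matrix.vandermonde y)ᵀ := by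
    ext i j
    have heval : (Matrix.of fun i j : Fin ℓ =>
        if i.val = 0 then (1 : ℝ) else iteratedDeriv (i.val - 1) ξ (x j)) i j
        = (p i).eval (y j) := by
      by_cases h : i.val = 0
      · simp [hp, h]
      · simp [hp, h, qpoly_iteratedDeriv a₀ a₁ a₂ ξ hsmooth hode, hy]
    rw [heval]
    have hlt : (p i).natDegree < ℓ := by rw [hpdeg]; exact i.isLt
    rw [eval_eq_sum_range' hlt]
    rw [Matrix.mul_apply]
    rw [Finset.sum_range fun k => (p i).coeff k * (y j) ^ k]
    simp [hA, Matrix.vandermonde]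
  rw [hfact]
  -- A is lower triangular with nonzero diagonal
  have hAtri : Aᵀ.BlockTriangular id := by
    intro k i hik
    simp only [id_eq] at hik
    show (p i).coeff k = 0
    exact coeff_eq_zero_of_natDegree_lt (by rw [hpdeg]; exact hik)
  have hAdet : A.det = ∏ i, (p i).coeff i := by
    rw [← Matrix.det_transpose, Matrix.det_of_upperTriangular hAtri]
    rfl
  have hAdet_ne : A.det ≠ 0 := by
    rw [hAdet]
    refine Finset.prod_ne_zero_iff.mpr fun i _ => ?_
    have : (p i).coeff ((p i).natDegree) ≠ 0 := mt leadingCoeff_eq_zero.mp (hpne i)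
    rwa [hpdeg] at this
  have hyinj : Function.Injective y := fun a b h => hx (hinj h)
  have hVdet : (Matrix.vandermonde y).det ≠ 0 :=
    Matrix.det_vandermonde_ne_zero_iff.mpr hyinj
  rw [Matrix.isUnit_iff_isUnit_det, Matrix.det_mul, Matrix.det_transpose]
  exact (mul_ne_zero hAdet_ne hVdet).isUnit
end

section
/- For n > 1 and d ≥ 1, the set M of n×d real matrices having at least one row with pairwise distinct entries is path-connected. -/
/-!
Let `B` be the matrix all of whose rows equal an injective row `v`. A matrix `A` whose row `ℓ` is
injective is joined to `B` by two straight segments through the matrix `C` with row `ℓ` taken from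
`A` and all other rows from `B`: row `ℓ` stays constant along the segment from `C` to `A`, and any
other row `k` stays equal to `v` along the segment from `B` to `C`.
-/

open Function
open scoped Convex

namespace Matrix

variable {m n E : Type*} [AddCommGroup E] [Module ℝ E]

theorem row_eq_of_mem_segment {A B C : Matrix m n E} {i : m} (hAB : A i = B i)
    (hC : C ∈ [A -[ℝ] B]) : C i = A i := by
  obtain ⟨a, b, -, -, hab, rfl⟩ := hC
  funext j
  simp only [add_apply, smul_apply, congrFun hAB j, ← add_smul, hab, one_smul]

variable [TopologicalSpace E] [ContinuousAdd E] [ContinuousSMul ℝ E]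

theorem joinedIn_of_row_eq_of_injective {A B : Matrix m n E} {i : m} (hAB : A i = B i)
    (hA : Injective (A i)) : JoinedIn {C : Matrix m n E | ∃ i, Injective (C i)} A B :=
  JoinedIn.of_segment_subset fun _ hC => ⟨i, (row_eq_of_mem_segment hAB hC).symm ▸ hA⟩

theorem isPathConnected_setOf_exists_injective_row [Nontrivial m] {v : n → E}
    (hv : Injective v) : IsPathConnected {A : Matrix m n E | ∃ i, Injective (A i)} := by
  classical
  inhabit m
  let B : Matrix m n E := of fun _ => v
  refine ⟨B, ⟨default, hv⟩, fun A ⟨ℓ, hℓ⟩ => ?_⟩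
  obtain ⟨k, hk⟩ := exists_ne ℓ
  have hBC : JoinedIn _ B (B.updateRow ℓ (A ℓ)) :=
    joinedIn_of_row_eq_of_injective (i := k) (updateRow_ne hk).symm hv
  have hCA : JoinedIn _ (B.updateRow ℓ (A ℓ)) A :=
    joinedIn_of_row_eq_of_injective updateRow_self (by rwa [updateRow_self])
  exact hBC.trans hCA

end Matrix

theorem good_set_pathConnected_general (n d : ℕ) (hn : 2 ≤ n)
    (M : Set (Matrix (Fin n) (Fin d) ℝ))
    (hM : M = {A | ∃ ℓ : Fin n, ∀ i j : Fin d, i ≠ j → A ℓ i ≠ A ℓ j}) :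
    IsPathConnected M := by
  have : Nontrivial (Fin n) := Fin.nontrivial_iff_two_le.mpr hn
  have hM' : M = {A | ∃ ℓ, Injective (A ℓ)} := by
    simp only [hM, injective_iff_pairwise_ne]
    rfl
  rw [hM']
  exact Matrix.isPathConnected_setOf_exists_injective_row (v := fun j : Fin d => (j : ℝ))
    (Nat.cast_injective.comp Fin.val_injective)

theorem good_set_pathConnected (n d : ℕ) (hn : 2 ≤ n) (hd : 1 ≤ d)
    (M : Set (Matrix (Fin n) (Fin d) ℝ))
    (hM : M = {A | ∃ ℓ : Fin n, ∀ i j : Fin d, i ≠ j → A ℓ i ≠ A ℓ j}) :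
    IsPathConnected M :=
  good_set_pathConnected_general n d hn M hM
end

section
/- Let f : ℝⁿ → ℝⁿ be continuous, E ⊂ ℝⁿ compact, δ, ζ > 0, and let E_s ⊂ ℝⁿ be a finite set such that for every x ∈ E there exist x̲, x̄ ∈ E_s with |x̲ - x̄|_∞ ≤ δ and x̲_i ≤ x_i ≤ x̄_i for all i. Let φ : ℝⁿ → ℝⁿ be monotone (x ⪯ x' implies φ(x) ⪯ φ(x'), where ⪯ is the componentwise order) with sup_{y ∈ E_s} |f(y) - φ(y)|_∞ ≤ ζ. Then sup_{x ∈ E} |f(x) - φ(x)|_∞ ≤ 2ω_f(δ) + 3ζ, where ω_f is a modulus of continuity of f on a compact set containing E and E_s. -/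
theorem monotone_approx_bound (n : ℕ)
    (f φ : (Fin n → ℝ) → (Fin n → ℝ))
    (hf : Continuous f)
    (E : Set (Fin n → ℝ)) (hE : IsCompact E)
    (Es : Finset (Fin n → ℝ))
    (δ ζ : ℝ) (hδ : 0 < δ) (hζ : 0 < ζ)
    (hsamples : ∀ x ∈ E, ∃ a ∈ Es, ∃ b ∈ Es,
      ‖a - b‖ ≤ δ ∧ a ≤ x ∧ x ≤ b)
    (hφmono : ∀ x y : Fin n → ℝ, x ≤ y → φ x ≤ φ y)
    (hclose : ∀ y ∈ Es, ‖f y - φ y‖ ≤ ζ)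
    (ω : ℝ → ℝ) (hωmono : Monotone ω)
    (hω : ∀ x y : Fin n → ℝ, x ∈ E ∪ ↑Es → y ∈ E ∪ ↑Es →
      ‖f x - f y‖ ≤ ω ‖x - y‖) :
    ∀ x ∈ E, ‖f x - φ x‖ ≤ 2 * ω δ + 3 * ζ := by
  intro x hx
  obtain ⟨a, ha, b, hb, hab, hax, hxb⟩ := hsamples x hx
  have hxE : x ∈ E ∪ ↑Es := Or.inl hx
  have haE : a ∈ E ∪ ↑Es := Or.inr ha
  have hbE : b ∈ E ∪ ↑Es := Or.inr hb
  have hω0 : 0 ≤ ω δ := by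
    have h1 := hω x x hxE hxE
    simp only [sub_self, norm_zero] at h1
    exact h1.trans (hωmono hδ.le)
  -- componentwise distance bounds
  have hcomp : ∀ (c : Fin n → ℝ), a ≤ c → c ≤ b → ‖x - c‖ ≤ δ := by
    intro c hac hcb
    have : 0 ≤ δ := hδ.le
    rw [pi_norm_le_iff_of_nonneg this]
    intro i
    have h1 : a i ≤ x i := hax i
    have h2 : x i ≤ b i := hxb i
    have h3 : a i ≤ c i := hac i
    have h4 : c i ≤ b i := hcb i
    have habi : |a i - b i| ≤ δ := (norm_le_pi_norm (a - b) i).trans hab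
    simp only [Pi.sub_apply, Real.norm_eq_abs]
    rw [abs_le] at habi ⊢
    constructor <;> linarith [habi.1, habi.2]
  have hxa : ‖x - a‖ ≤ δ := hcomp a le_rfl (hax.trans hxb)
  have hxb' : ‖x - b‖ ≤ δ := hcomp b (hax.trans hxb) le_rfl
  have hfa : ‖f x - f a‖ ≤ ω δ := (hω x a hxE haE).trans (hωmono hxa)
  have hfb : ‖f x - f b‖ ≤ ω δ := (hω x b hxE hbE).trans (hωmono hxb')
  have key : ‖f x - φ x‖ ≤ ω δ + ζ := by
    rw [pi_norm_le_iff_of_nonneg (by linarith)]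
    intro i
    have hpa : φ a i ≤ φ x i := hφmono a x hax i
    have hpb : φ x i ≤ φ b i := hφmono x b hxb i
    have hca : |f a i - φ a i| ≤ ζ := (norm_le_pi_norm (f a - φ a) i).trans (hclose a ha)
    have hcb : |f b i - φ b i| ≤ ζ := (norm_le_pi_norm (f b - φ b) i).trans (hclose b hb)
    have hfai : |f x i - f a i| ≤ ω δ := (norm_le_pi_norm (f x - f a) i).trans hfa
    have hfbi : |f x i - f b i| ≤ ω δ := (norm_le_pi_norm (f x - f b) i).trans hfb
    simp only [Pi.sub_apply, Real.norm_eq_abs]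
    rw [abs_le]
    rw [abs_le] at hca hcb hfai hfbi
    constructor <;> linarith [hca.1, hca.2, hcb.1, hcb.2, hfai.1, hfai.2, hfbi.1, hfbi.2]
  linarith
end

section
/- The image of Σ : ℝⁿ → ℝⁿ, Σ(x) = (σ(x₁), …, σ(x_n)), contains n linearly independent vectors whenever σ : ℝ → ℝ is continuously differentiable and there exists b ∈ ℝ with σ'(b) ≠ 0. Consequently there exist c₁, …, c_n ∈ ℝⁿ such that Σ(c₁), …, Σ(c_n) are linearly independent. -/
theorem image_contains_linearly_independent (n : ℕ) (σ : ℝ → ℝ)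
    (hσ : ContDiff ℝ 1 σ) (b : ℝ) (hb : deriv σ b ≠ 0) :
    ∃ c : Fin n → (Fin n → ℝ),
      LinearIndependent ℝ (fun l : Fin n => fun i : Fin n => σ (c l i)) := by
  -- σ is not constant
  have hnc : ∃ x y : ℝ, σ x ≠ σ y := by
    by_contra h
    push_neg at h
    have : σ = fun _ => σ 0 := funext fun x => h x 0
    rw [this] at hb
    simp at hb
  obtain ⟨x, y, hxy⟩ := hnc
  -- range of σ is infinite
  have hinf : (Set.range σ).Infinite := by
    rcases lt_or_gt_of_ne hxy with hlt | hlt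
    · exact (Set.Icc_infinite hlt).mono (intermediate_value_univ x y hσ.continuous)
    · exact (Set.Icc_infinite hlt).mono (intermediate_value_univ y x hσ.continuous)
  -- choose v in the range, and u in the range avoiding v and (1-n)*v
  obtain ⟨xv, hxv⟩ : ∃ xv, σ xv = σ 0 := ⟨0, rfl⟩
  set v : ℝ := σ 0 with hv
  obtain ⟨u, hu⟩ := (hinf.diff (Set.toFinite {v, (1 - (n : ℝ)) * v})).nonempty
  obtain ⟨⟨xu, hxu⟩, hu2⟩ := hu
  simp only [Set.mem_insert_iff, Set.mem_singleton_iff, not_or] at hu2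
  obtain ⟨huv, hun⟩ := hu2
  have key : u + ((n : ℝ) - 1) * v ≠ 0 := by
    intro h
    apply hun
    linarith
  refine ⟨fun l i => if i = l then xu else xv, ?_⟩
  have hval : ∀ l i : Fin n, σ (if i = l then xu else xv) = if i = l then u else v := by
    intro l i
    by_cases h : i = l <;> simp [h, hxu, hxv]
  rw [Fintype.linearIndependent_iff]
  intro g hg l
  have hgi : ∀ i : Fin n, (∑ j, g j) * v + g i * (u - v) = 0 := by
    intro i
    have := congrFun hg i
    simp only [Finset.sum_apply, Pi.smul_apply, smul_eq_mul, Pi.zero_apply] at this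
    have expand : ∀ j : Fin n, g j * σ (if i = j then xu else xv)
        = g j * v + (if j = i then g j * (u - v) else 0) := by
      intro j
      rw [hval j i]
      by_cases h : i = j
      · subst h; simp; ring
      · have h' : ¬ j = i := fun e => h e.symm
        simp [h, h']
    calc (∑ j, g j) * v + g i * (u - v)
        = ∑ j, (g j * v + (if j = i then g j * (u - v) else 0)) := by
          rw [Finset.sum_add_distrib, ← Finset.sum_mul,
            Finset.sum_ite_eq' Finset.univ i (fun j => g j * (u - v))]
          simp
      _ = ∑ j, g j * σ (if i = j then xu else xv) :=
          Finset.sum_congr rfl fun j _ => (expand j).symm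
      _ = 0 := this
  -- all g i are equal
  have hcon : ∀ i : Fin n, g i = g l := by
    intro i
    have h1 := hgi i
    have h2 := hgi l
    have hne : u - v ≠ 0 := sub_ne_zero.mpr huv
    have : g i * (u - v) = g l * (u - v) := by linarith
    exact mul_right_cancel₀ hne this
  have hsum : (∑ j, g j) = (n : ℝ) * g l := by
    rw [Finset.sum_congr rfl (fun j _ => hcon j)]
    simp [Finset.card_univ, mul_comm]
  have h3 := hgi l
  rw [hsum] at h3
  have : g l * (u + ((n : ℝ) - 1) * v) = 0 := by ring_nf; ring_nf at h3; linarith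
  exact (mul_eq_zero.mp this).resolve_right key
end
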